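/- For all integers d ≥ 2, q₁,…,q_d ≥ 2 and s ≥ 1, there exists a quasi-isometry from DL(q₁^s,…,q_d^s) to DL(q₁,…,q_d). In particular, DL_d(q) is quasi-isometric with DL_d(q^s) for every s ≥ 1. -/

import Mathlib

/-- A vertex of the homogeneous tree `T_q` with a fixed end: a pair `(f, n)` with
`f : ℤ → ℤ/qℤ` finitely supported and `f k = 0` for `k ≥ n`. -/
structure TreeVert (q : ℕ) where
  f : ℤ → ZMod q
  lvl : ℤ
  finsupp : {k : ℤ | f k ≠ 0}.Finite
  eventually_zero : ∀ k, lvl ≤ k → f k = 0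

/-- Adjacency in the tree `T_q`. -/
def treeAdj (q : ℕ) (u v : TreeVert q) : Prop :=
  (v.lvl = u.lvl + 1 ∧ ∀ k < u.lvl, u.f k = v.f k) ∨
  (u.lvl = v.lvl + 1 ∧ ∀ k < v.lvl, v.f k = u.f k)

/-- The homogeneous tree `T_q` with a fixed end, as a simple graph. -/
def treeGraph (q : ℕ) : SimpleGraph (TreeVert q) where
  Adj := treeAdj q
  symm := ⟨fun _ _ h => Or.symm h⟩
  loopless := by
    refine ⟨?_⟩
    rintro u (⟨h, _⟩ | ⟨h, _⟩) <;> omega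

/-- Vertices of the Diestel-Leader graph `DL(q₁,…,q_d)`. -/
def DLVert (d : ℕ) (q : Fin d → ℕ) : Type :=
  { x : (j : Fin d) → TreeVert (q j) // ∑ j, (x j).lvl = 0 }

/-- Adjacency in the Diestel-Leader graph. -/
def DLAdj (d : ℕ) (q : Fin d → ℕ) (x y : DLVert d q) : Prop :=
  ∃ i j : Fin d, i ≠ j ∧ treeAdj (q i) (x.1 i) (y.1 i) ∧ treeAdj (q j) (x.1 j) (y.1 j) ∧
    ∀ k, k ≠ i → k ≠ j → x.1 k = y.1 k

/-- The Diestel-Leader graph `DL(q₁,…,q_d)`. -/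
def DLGraph (d : ℕ) (q : Fin d → ℕ) : SimpleGraph (DLVert d q) where
  Adj := DLAdj d q
  symm := by
    refine ⟨?_⟩
    rintro x y ⟨i, j, hij, hi, hj, hk⟩
    exact ⟨i, j, hij, Or.symm hi, Or.symm hj, fun k h1 h2 => (hk k h1 h2).symm⟩
  loopless := by
    refine ⟨?_⟩
    rintro x ⟨i, j, hij, hi, _, _⟩
    rcases hi with ⟨h, _⟩ | ⟨h, _⟩ <;> omega

/-!
Write `expand` for the map that replaces each letter of `ZMod (q ^ s)` by its `s` base-`q`
digits, laid out on `s` consecutive levels; it maps `DL(q₁^s,…,q_d^s)` to `DL(q₁,…,q_d)` and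
multiplies levels by `s`. Distances in a Diestel–Leader graph are governed, up to constants
depending only on `d`, by the depth `-∑ j, l j` of levels `l` at which the coordinates of two
vertices have common ancestors: a walk of length `L` produces such `l` with `-2 ∑ l ≤ d L`, and
conversely such `l` yields a walk of length `(d + 1) (-∑ l)` that switches the coordinates one at
a time through their common ancestors. Since `expand` multiplies common-ancestor levels by `s`
(up to rounding), it is a quasi-isometry, and it is coarsely onto because every vertex lies close
to a vertex whose levels are all divisible by `s`.
-/

theorem Nat.mod_pow_eq_of_digits_eq {Q n m : ℕ} :
    ∀ s, (∀ r < s, n / Q ^ r % Q = m / Q ^ r % Q) → n % Q ^ s = m % Q ^ s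
  | 0, _ => by simp [Nat.mod_one]
  | s + 1, h => by
    rw [Nat.mod_pow_succ, Nat.mod_pow_succ,
      Nat.mod_pow_eq_of_digits_eq s (fun r hr => h r (by omega)), h s (by omega)]

namespace ZMod

variable {Q s : ℕ}

def digit (a : ZMod (Q ^ s)) (r : Fin s) : ZMod Q := ((a.val / Q ^ (r : ℕ) : ℕ) : ZMod Q)

@[simp] theorem digit_zero (r : Fin s) : digit (0 : ZMod (Q ^ s)) r = 0 := by
  simp [digit]

theorem digit_injective [NeZero Q] :
    Function.Injective (digit : ZMod (Q ^ s) → Fin s → ZMod Q) := by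
  intro a b h
  have hval : a.val % Q ^ s = b.val % Q ^ s :=
    Nat.mod_pow_eq_of_digits_eq s fun r hr => by
      simpa [digit, ZMod.natCast_eq_natCast_iff'] using congrFun h ⟨r, hr⟩
  rw [Nat.mod_eq_of_lt a.val_lt, Nat.mod_eq_of_lt b.val_lt] at hval
  exact ZMod.val_injective _ hval

noncomputable def digitEquiv [NeZero Q] : ZMod (Q ^ s) ≃ (Fin s → ZMod Q) :=
  Equiv.ofBijective digit <| (Fintype.bijective_iff_injective_and_card _).mpr
    ⟨digit_injective, by simp⟩

@[simp] theorem digitEquiv_symm_zero [NeZero Q] : (digitEquiv.symm 0 : ZMod (Q ^ s)) = 0 :=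
  digitEquiv.symm_apply_eq.mpr (funext fun r => (digit_zero r).symm)

end ZMod

namespace Int

variable {s : ℕ} [NeZero s]

theorem divModEquiv_fst_lt_iff {k l : ℤ} : (divModEquiv s k).1 < l ↔ k < l * s := by
  simp [Int.ediv_lt_iff_lt_mul (natCast_pos.mpr (Nat.pos_of_neZero s))]

theorem divModEquiv_symm_lt_iff {p : ℤ × Fin s} {l : ℤ} :
    (divModEquiv s).symm p < l * s ↔ p.1 < l := by
  rw [← divModEquiv_fst_lt_iff, Equiv.apply_symm_apply]

end Int

theorem exists_le_sum_eq_zero {ι M : Type*} [Fintype ι] [DecidableEq ι] [AddCommGroup M]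
    [PartialOrder M] [IsOrderedAddMonoid M] {l : ι → M} (hl : ∑ j, l j ≤ 0) (b : ι) :
    ∃ m : ι → M, l ≤ m ∧ ∑ j, m j = 0 ∧ ∀ j ≠ b, m j = l j :=
  ⟨l + Pi.single b (-∑ j, l j), le_add_of_nonneg_right (Pi.single_nonneg.mpr (neg_nonneg.mpr hl)),
    by simp [Finset.sum_add_distrib], fun j hj => by simp [hj]⟩

namespace TreeVert

variable {q : ℕ}

theorem ext {u v : TreeVert q} (hf : u.f = v.f) (hl : u.lvl = v.lvl) : u = v := by
  cases u; cases v; simp_all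

/-- `u` and `v` have the same ancestor at level `l`. -/
structure AgreeBelow (u v : TreeVert q) (l : ℤ) : Prop where
  le_left : l ≤ u.lvl
  le_right : l ≤ v.lvl
  eq_of_lt : ∀ k < l, u.f k = v.f k

namespace AgreeBelow

theorem refl (u : TreeVert q) : AgreeBelow u u u.lvl := ⟨le_rfl, le_rfl, fun _ _ => rfl⟩

theorem mono {u v : TreeVert q} {l l' : ℤ} (h : AgreeBelow u v l) (hl : l' ≤ l) :
    AgreeBelow u v l' :=
  ⟨hl.trans h.le_left, hl.trans h.le_right, fun k hk => h.eq_of_lt k (hk.trans_le hl)⟩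

theorem trans {u v w : TreeVert q} {l l' : ℤ} (huv : AgreeBelow u v l)
    (hvw : AgreeBelow v w l') : AgreeBelow u w (min l l') :=
  ⟨(min_le_left _ _).trans huv.le_left, (min_le_right _ _).trans hvw.le_right, fun k hk =>
    (huv.eq_of_lt k (hk.trans_le (min_le_left _ _))).trans
      (hvw.eq_of_lt k (hk.trans_le (min_le_right _ _)))⟩

end AgreeBelow

theorem agreeBelow_of_treeAdj {u v : TreeVert q} (h : treeAdj q u v) :
    AgreeBelow u v (min u.lvl v.lvl) := by
  refine ⟨min_le_left _ _, min_le_right _ _, fun k hk => ?_⟩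
  rcases h with ⟨-, h⟩ | ⟨-, h⟩
  · exact h k (hk.trans_le (min_le_left _ _))
  · exact (h k (hk.trans_le (min_le_right _ _))).symm

theorem exists_agreeBelow (u v : TreeVert q) : ∃ l, AgreeBelow u v l := by
  obtain ⟨b, hb⟩ := (u.finsupp.union v.finsupp).bddBelow
  refine ⟨min (min u.lvl v.lvl) (b - 1), by omega, by omega, fun k hk => ?_⟩
  by_contra hne
  have hk : k ∈ {k | u.f k ≠ 0} ∪ {k | v.f k ≠ 0} := by
    by_contra hk
    simp only [Set.mem_union, Set.mem_ofPred_eq, not_or, not_not] at hk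
    exact hne (hk.1.trans hk.2.symm)
  have := hb hk
  omega

/-- The vertex at level `n` of the geodesic through `u` whose digits at and above `u.lvl`
vanish: an ancestor of `u` for `n ≤ u.lvl`, a descendant otherwise. -/
def toLevel (u : TreeVert q) (n : ℤ) : TreeVert q where
  f k := if min n u.lvl ≤ k then 0 else u.f k
  lvl := n
  finsupp := u.finsupp.subset fun k hk => by
    simp only [Set.mem_ofPred_eq] at hk ⊢
    split_ifs at hk with h
    · exact absurd rfl hk
    · exact hk
  eventually_zero k hk := if_pos ((min_le_left _ _).trans hk)

theorem toLevel_self (u : TreeVert q) : u.toLevel u.lvl = u := by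
  refine ext (funext fun k => ?_) rfl
  simp only [toLevel, min_self]
  split_ifs with h
  · exact (u.eventually_zero k h).symm
  · rfl

theorem treeAdj_toLevel_succ (u : TreeVert q) (n : ℤ) :
    treeAdj q (u.toLevel n) (u.toLevel (n + 1)) := by
  refine Or.inl ⟨rfl, fun k hk => ?_⟩
  simp only [toLevel] at hk ⊢
  split_ifs <;> first | rfl | omega

theorem agreeBelow_toLevel (u : TreeVert q) (n : ℤ) : AgreeBelow (u.toLevel n) u (min n u.lvl) :=
  ⟨min_le_left _ _, min_le_right _ _, fun _ hk => if_neg (not_le.mpr hk)⟩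

theorem AgreeBelow.toLevel_eq {u v : TreeVert q} {l : ℤ} (h : AgreeBelow u v l) :
    u.toLevel l = v.toLevel l := by
  refine ext (funext fun k => ?_) rfl
  simp only [toLevel, min_eq_left h.le_left, min_eq_left h.le_right]
  split_ifs with hk
  · rfl
  · exact h.eq_of_lt k (not_le.mp hk)

variable {Q s : ℕ} [NeZero s]

def expand (u : TreeVert (Q ^ s)) : TreeVert Q where
  f k := ZMod.digit (u.f (Int.divModEquiv s k).1) (Int.divModEquiv s k).2
  lvl := u.lvl * s
  finsupp := by
    refine ((u.finsupp.prod (Set.finite_univ (α := Fin s))).preimage_embedding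
      (Int.divModEquiv s).toEmbedding).subset fun k hk => ⟨fun h0 => hk ?_, trivial⟩
    rw [show u.f (Int.divModEquiv s k).1 = 0 from h0, ZMod.digit_zero]
  eventually_zero k hk := by
    rw [u.eventually_zero _ (not_lt.mp (hk.not_gt ∘ Int.divModEquiv_fst_lt_iff.mp)),
      ZMod.digit_zero]

theorem expand_f_divModEquiv_symm (u : TreeVert (Q ^ s)) (p : ℤ × Fin s) :
    (expand u).f ((Int.divModEquiv s).symm p) = ZMod.digit (u.f p.1) p.2 := by
  simp only [expand, Equiv.apply_symm_apply]

theorem AgreeBelow.expand {u v : TreeVert (Q ^ s)} {l : ℤ} (h : AgreeBelow u v l) :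
    AgreeBelow (TreeVert.expand u) (TreeVert.expand v) (l * s) where
  le_left := mul_le_mul_of_nonneg_right h.le_left (Int.natCast_nonneg s)
  le_right := mul_le_mul_of_nonneg_right h.le_right (Int.natCast_nonneg s)
  eq_of_lt k hk := by
    simp only [TreeVert.expand, h.eq_of_lt _ (Int.divModEquiv_fst_lt_iff.mpr hk)]

theorem AgreeBelow.of_expand [NeZero Q] {u v : TreeVert (Q ^ s)} {l : ℤ}
    (h : AgreeBelow (TreeVert.expand u) (TreeVert.expand v) (l * s)) : AgreeBelow u v l where
  le_left := le_of_mul_le_mul_right h.le_left (Int.natCast_pos.mpr (Nat.pos_of_neZero s))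
  le_right := le_of_mul_le_mul_right h.le_right (Int.natCast_pos.mpr (Nat.pos_of_neZero s))
  eq_of_lt a ha := ZMod.digit_injective <| funext fun r => by
    simpa only [expand_f_divModEquiv_symm] using
      h.eq_of_lt _ (Int.divModEquiv_symm_lt_iff.mpr (show (a, r).1 < l from ha))

theorem exists_expand_eq [NeZero Q] (v : TreeVert Q) {m : ℤ} (hv : v.lvl = m * s) :
    ∃ u : TreeVert (Q ^ s), u.lvl = m ∧ expand u = v := by
  let block (a : ℤ) : Fin s → ZMod Q := fun r => v.f ((Int.divModEquiv s).symm (a, r))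
  refine ⟨⟨fun a => ZMod.digitEquiv.symm (block a), m, ?_, fun a ha => ?_⟩, rfl,
    ext (funext fun k => ?_) hv.symm⟩
  · refine (v.finsupp.image fun k => (Int.divModEquiv s k).1).subset fun a ha => ?_
    obtain ⟨r, hr⟩ : ∃ r, block a r ≠ 0 := by
      by_contra! h
      exact ha (by simp [show block a = 0 from funext h])
    exact ⟨_, hr, by simp only [Equiv.apply_symm_apply]⟩
  · have : block a = 0 := funext fun r => v.eventually_zero _ <| by
      rw [hv, ← not_lt, Int.divModEquiv_symm_lt_iff, not_lt]; exact ha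
    simp [this]
  · show ZMod.digitEquiv (ZMod.digitEquiv.symm _) _ = _
    simp only [Equiv.apply_symm_apply, block, Prod.mk.eta, Equiv.symm_apply_apply]

end TreeVert

namespace DLVert

open SimpleGraph TreeVert

variable {d : ℕ} {r : Fin d → ℕ}

theorem treeAdj_or_eq_of_adj {x y : DLVert d r} (h : (DLGraph d r).Adj x y) (j : Fin d) :
    treeAdj (r j) (x.1 j) (y.1 j) ∨ x.1 j = y.1 j := by
  obtain ⟨i, k, -, hi, hk, hrest⟩ := h
  by_cases hji : j = i
  · exact hji ▸ Or.inl hi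
  by_cases hjk : j = k
  · exact hjk ▸ Or.inl hk
  exact Or.inr (hrest j hji hjk)

theorem exists_agreeBelow_of_walk {x y : DLVert d r} (p : (DLGraph d r).Walk x y) (j : Fin d) :
    ∃ l, (x.1 j).AgreeBelow (y.1 j) l ∧ (x.1 j).lvl + (y.1 j).lvl - 2 * l ≤ p.length := by
  induction p with
  | nil => exact ⟨_, .refl _, by rw [Walk.length_nil]; omega⟩
  | @cons u v w hadj p ih =>
    obtain ⟨l, hl, hlen⟩ := ih
    rw [Walk.length_cons, Nat.cast_succ]
    rcases treeAdj_or_eq_of_adj hadj j with h | h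
    · refine ⟨_, (agreeBelow_of_treeAdj h).trans hl, ?_⟩
      have := hl.le_left
      rcases h with ⟨h, -⟩ | ⟨h, -⟩ <;> omega
    · exact ⟨l, h ▸ hl, by rw [h]; omega⟩

theorem exists_agreeBelow_of_walk_sum {x y : DLVert d r} (p : (DLGraph d r).Walk x y) :
    ∃ l : Fin d → ℤ, (∀ j, (x.1 j).AgreeBelow (y.1 j) (l j)) ∧ -2 * ∑ j, l j ≤ d * p.length := by
  choose l hl hlen using exists_agreeBelow_of_walk p
  refine ⟨l, hl, ?_⟩
  calc -2 * ∑ j, l j = ∑ j, ((x.1 j).lvl + (y.1 j).lvl - 2 * l j) := by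
        rw [Finset.sum_sub_distrib, Finset.sum_add_distrib, x.2, y.2, ← Finset.mul_sum]; ring
    _ ≤ ∑ _j : Fin d, (p.length : ℤ) := Finset.sum_le_sum fun j _ => hlen j
    _ = d * p.length := by simp

def ofLevels (w : ∀ j, TreeVert (r j)) (n : Fin d → ℤ) (hn : ∑ j, n j = 0) : DLVert d r :=
  ⟨fun j => (w j).toLevel (n j), hn⟩

theorem ofLevels_lvl (x : DLVert d r) : ofLevels x.1 (fun j => (x.1 j).lvl) x.2 = x :=
  Subtype.ext (funext fun _ => toLevel_self _)

theorem adj_ofLevels (w : ∀ j, TreeVert (r j)) {n n' : Fin d → ℤ} (hn : ∑ j, n j = 0)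
    (hn' : ∑ j, n' j = 0) {i k : Fin d} (hik : i ≠ k) (hi : n' i = n i + 1)
    (hk : n k = n' k + 1) (hrest : ∀ j, j ≠ i → j ≠ k → n' j = n j) :
    (DLGraph d r).Adj (ofLevels w n hn) (ofLevels w n' hn') := by
  refine ⟨i, k, hik, ?_, ?_, fun j hji hjk => ?_⟩
  · show treeAdj _ ((w i).toLevel (n i)) ((w i).toLevel (n' i))
    exact hi ▸ treeAdj_toLevel_succ _ _
  · show treeAdj _ ((w k).toLevel (n k)) ((w k).toLevel (n' k))
    exact hk ▸ (treeAdj_toLevel_succ _ _).symm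
  · show (w j).toLevel (n j) = (w j).toLevel (n' j)
    rw [hrest j hji hjk]

theorem edist_ofLevels_le (w : ∀ j, TreeVert (r j)) {n m : Fin d → ℤ} (hn : ∑ j, n j = 0)
    (hm : ∑ j, m j = 0) :
    (DLGraph d r).edist (ofLevels w n hn) (ofLevels w m hm) ≤ ∑ j, (m j - n j).toNat := by
  induction hN : ∑ j, (m j - n j).toNat generalizing n with
  | zero =>
    have hle : ∀ j ∈ Finset.univ, m j ≤ n j := fun j _ => by
      have := (Finset.sum_eq_zero_iff.mp hN) j (Finset.mem_univ _)
      omega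
    obtain rfl : m = n :=
      funext fun j => (Finset.sum_eq_sum_iff_of_le hle).mp (hm.trans hn.symm) j (Finset.mem_univ _)
    simp
  | succ N ih =>
    obtain ⟨i, -, hi⟩ := Finset.exists_ne_zero_of_sum_ne_zero (hN.trans_ne N.succ_ne_zero)
    obtain ⟨k, hk⟩ : ∃ k, m k < n k := by
      by_contra! h
      exact (Finset.sum_lt_sum (fun j _ => h j) ⟨i, Finset.mem_univ _, by omega⟩).ne
        (hn.trans hm.symm)
    have hik : i ≠ k := by rintro rfl; omega
    set n' : Fin d → ℤ := n + Pi.single i 1 - Pi.single k 1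
    have hn' : ∑ j, n' j = 0 := by simp [n', Finset.sum_add_distrib, Finset.sum_sub_distrib, hn]
    have hstep (j : Fin d) :
        (m j - n' j).toNat + (Pi.single i 1 : Fin d → ℕ) j = (m j - n j).toNat := by
      by_cases hji : j = i
      · subst hji; simp [n', hik]; omega
      by_cases hjk : j = k
      · subst hjk; simp [n', hji]; omega
      simp [n', hji, hjk]
    have hN' : ∑ j, (m j - n' j).toNat = N := by
      have := Finset.sum_congr rfl fun j (_ : j ∈ Finset.univ) => hstep j
      rw [Finset.sum_add_distrib, Finset.sum_pi_single'] at this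
      simp only [Finset.mem_univ, if_true] at this
      omega
    calc (DLGraph d r).edist (ofLevels w n hn) (ofLevels w m hm)
        ≤ (DLGraph d r).edist (ofLevels w n hn) (ofLevels w n' hn') +
          (DLGraph d r).edist (ofLevels w n' hn') (ofLevels w m hm) := SimpleGraph.edist_triangle
      _ ≤ 1 + N := by
        gcongr
        · exact (edist_eq_one_iff_adj.mpr (adj_ofLevels w hn hn' hik (by simp [n', hik])
            (by simp [n', hik.symm]) fun j hji hjk => by simp [n', hji, hjk])).le
        · exact ih hn' hN'
      _ = (N + 1 : ℕ) := by push_cast; ring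

theorem edist_ofLevels_le_of_le (w : ∀ j, TreeVert (r j)) {l n m : Fin d → ℤ}
    (hn : ∑ j, n j = 0) (hm : ∑ j, m j = 0) (hln : l ≤ n) (hlm : l ≤ m) :
    (DLGraph d r).edist (ofLevels w n hn) (ofLevels w m hm) ≤ (-∑ j, l j).toNat := by
  have hl : ∑ j, l j ≤ 0 := hn ▸ Finset.sum_le_sum fun j _ => hln j
  refine (edist_ofLevels_le w hn hm).trans (Nat.cast_le.mpr ((Int.le_toNat (by omega)).mpr ?_))
  calc ((∑ j, (m j - n j).toNat : ℕ) : ℤ) = ∑ j, ((m j - n j).toNat : ℤ) := by push_cast; rfl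
    _ ≤ ∑ j, (m j - l j) := Finset.sum_le_sum fun j _ => by
      have : l j ≤ n j := hln j
      have : l j ≤ m j := hlm j
      omega
    _ = -∑ j, l j := by rw [Finset.sum_sub_distrib, hm, zero_sub]

theorem edist_le_of_agreeBelow (hd : 2 ≤ d) {x y : DLVert d r} {l : Fin d → ℤ}
    (h : ∀ j, (x.1 j).AgreeBelow (y.1 j) (l j)) :
    (DLGraph d r).edist x y ≤ ((d + 1) * (-∑ j, l j).toNat : ℕ) := by
  have : Nontrivial (Fin d) := Fin.nontrivial_iff_two_le.mpr hd
  set σ := (-∑ j, l j).toNat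
  have hl : ∑ j, l j ≤ 0 := x.2 ▸ Finset.sum_le_sum fun j _ => (h j).le_left
  let mix (S : Finset (Fin d)) (j : Fin d) : TreeVert (r j) := if j ∈ S then x.1 j else y.1 j
  -- Coordinates are switched from `x` to `y` one at a time; coordinate `a` is switched at level
  -- `l a`, where `x a` and `y a` share their ancestor, with the surplus `-∑ l` parked on `b ≠ a`.
  have key (S : Finset (Fin d)) : ∀ n (hn : ∑ j, n j = 0), l ≤ n →
      (DLGraph d r).edist (ofLevels (mix S) n hn) y ≤ ((S.card + 1) * σ : ℕ) := by
    induction S using Finset.induction_on with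
    | empty =>
      intro n hn hln
      have hy : mix ∅ = y.1 := funext fun j => if_neg (Finset.notMem_empty j)
      have := edist_ofLevels_le_of_le y.1 hn y.2 hln fun j => (h j).le_right
      rw [ofLevels_lvl] at this
      simpa [hy] using this
    | insert a S ha ih =>
      intro n hn hln
      obtain ⟨b, hb⟩ := exists_ne a
      obtain ⟨m, hlm, hm, hma⟩ := exists_le_sum_eq_zero hl b
      have hswitch : ofLevels (mix (insert a S)) m hm = ofLevels (mix S) m hm := by
        refine Subtype.ext (funext fun j => ?_)
        by_cases hja : j = a
        · subst hja
          show (mix _ j).toLevel (m j) = (mix _ j).toLevel (m j)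
          simp only [mix, Finset.mem_insert_self, if_true, ha, if_false, hma j hb.symm]
          exact (h j).toLevel_eq
        · show (mix _ j).toLevel (m j) = (mix _ j).toLevel (m j)
          simp only [mix, Finset.mem_insert, hja, false_or]
      calc (DLGraph d r).edist (ofLevels (mix (insert a S)) n hn) y
          ≤ (DLGraph d r).edist (ofLevels (mix (insert a S)) n hn)
              (ofLevels (mix (insert a S)) m hm) + (DLGraph d r).edist (ofLevels (mix S) m hm) y :=
            hswitch ▸ SimpleGraph.edist_triangle
        _ ≤ σ + ((S.card + 1) * σ : ℕ) :=
            add_le_add (edist_ofLevels_le_of_le _ hn hm hln hlm) (ih m hm hlm)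
        _ = (((insert a S).card + 1) * σ : ℕ) := by
            rw [Finset.card_insert_of_notMem ha]; push_cast; ring
  have hx : mix Finset.univ = x.1 := funext fun j => if_pos (Finset.mem_univ j)
  simpa [hx, ofLevels_lvl] using key Finset.univ _ x.2 fun j => (h j).le_left

theorem reachable (hd : 2 ≤ d) (x y : DLVert d r) : (DLGraph d r).Reachable x y := by
  choose l hl using fun j => exists_agreeBelow (x.1 j) (y.1 j)
  exact reachable_of_edist_ne_top
    ((edist_le_of_agreeBelow hd hl).trans_lt (ENat.natCast_lt_top _)).ne

theorem dist_le_of_agreeBelow (hd : 2 ≤ d) {x y : DLVert d r} {l : Fin d → ℤ}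
    (h : ∀ j, (x.1 j).AgreeBelow (y.1 j) (l j)) :
    ((DLGraph d r).dist x y : ℤ) ≤ (d + 1) * -∑ j, l j := by
  have hl : ∑ j, l j ≤ 0 := x.2 ▸ Finset.sum_le_sum fun j _ => (h j).le_left
  have := (reachable hd x y).coe_dist_eq_edist ▸ edist_le_of_agreeBelow hd h
  have := Nat.cast_le.mp this
  zify at this
  rwa [Int.toNat_of_nonneg (by omega)] at this

theorem exists_agreeBelow_dist (hd : 2 ≤ d) (x y : DLVert d r) :
    ∃ l : Fin d → ℤ, (∀ j, (x.1 j).AgreeBelow (y.1 j) (l j)) ∧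
      -2 * ∑ j, l j ≤ d * (DLGraph d r).dist x y := by
  obtain ⟨p, hp⟩ := (reachable hd x y).exists_walk_length_eq_dist
  exact hp ▸ exists_agreeBelow_of_walk_sum p

variable {s : ℕ} [NeZero s]

def expand (x : DLVert d (fun j => r j ^ s)) : DLVert d r :=
  ⟨fun j => (x.1 j).expand, by
    show ∑ j, (x.1 j).lvl * s = 0
    rw [← Finset.sum_mul, x.2, zero_mul]⟩

theorem dist_expand_le (hd : 2 ≤ d) (x y : DLVert d (fun j => r j ^ s)) :
    (DLGraph d r).dist (expand x) (expand y) ≤ (d + 1) * d * s * (DLGraph d _).dist x y := by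
  obtain ⟨l, hl, hlen⟩ := exists_agreeBelow_dist hd x y
  have := dist_le_of_agreeBelow (x := expand x) (y := expand y) (l := fun j => l j * s) hd
    fun j => (hl j).expand
  rw [← Finset.sum_mul] at this
  zify
  nlinarith [mul_le_mul_of_nonneg_left hlen (by positivity : (0 : ℤ) ≤ (d + 1) * s)]

theorem dist_le_dist_expand [∀ j, NeZero (r j)] (hd : 2 ≤ d)
    (x y : DLVert d (fun j => r j ^ s)) :
    (DLGraph d _).dist x y ≤ (d + 1) * d * (DLGraph d r).dist (expand x) (expand y) +
      (d + 1) * d * s := by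
  have hs : (0 : ℤ) < s := Int.natCast_pos.mpr (Nat.pos_of_neZero s)
  obtain ⟨μ, hμ, hlen⟩ := exists_agreeBelow_dist hd (expand x) (expand y)
  have hl (j : Fin d) : (x.1 j).AgreeBelow (y.1 j) (μ j / s) :=
    ((hμ j).mono (Int.ediv_mul_le _ hs.ne')).of_expand
  have hsum : ∑ j, μ j / s ≤ 0 := x.2 ▸ Finset.sum_le_sum fun j _ => (hl j).le_left
  have hround : -(∑ j, μ j / s) * s ≤ -∑ j, μ j + d * s := by
    have (j : Fin d) : -(μ j / s * s) ≤ -μ j + s := by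
      have := Int.lt_ediv_add_one_mul_self (μ j) hs; linarith
    simpa [Finset.sum_mul, Finset.sum_add_distrib, Finset.sum_neg_distrib]
      using Finset.sum_le_sum fun j (_ : j ∈ Finset.univ) => this j
  zify
  calc ((DLGraph d _).dist x y : ℤ) ≤ (d + 1) * -∑ j, μ j / s := dist_le_of_agreeBelow hd hl
    _ ≤ (d + 1) * ((-∑ j, μ j / s) * s) := by gcongr; exact le_mul_of_one_le_right (by omega) hs
    _ ≤ (d + 1) * (-∑ j, μ j + d * s) := by gcongr
    _ ≤ (d + 1) * (d * (DLGraph d r).dist (expand x) (expand y) + d * s) := by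
      gcongr
      nlinarith
    _ = _ := by ring

theorem exists_dist_expand_le [∀ j, NeZero (r j)] (hd : 2 ≤ d) (z : DLVert d r) :
    ∃ x : DLVert d (fun j => r j ^ s), (DLGraph d r).dist (expand x) z ≤ (d + 1) * d * s := by
  have hs : (0 : ℤ) < s := Int.natCast_pos.mpr (Nat.pos_of_neZero s)
  set a : Fin d → ℤ := fun j => (z.1 j).lvl / s
  have ha : ∑ j, a j ≤ 0 := by
    refine nonpos_of_mul_nonpos_left ?_ hs
    calc (∑ j, a j) * s = ∑ j, a j * s := Finset.sum_mul _ _ _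
      _ ≤ ∑ j, (z.1 j).lvl := Finset.sum_le_sum fun j _ => Int.ediv_mul_le _ hs.ne'
      _ = 0 := z.2
  obtain ⟨m, ham, hm, -⟩ := exists_le_sum_eq_zero ha ⟨0, by omega⟩
  choose u hu hexp using fun j => exists_expand_eq ((z.1 j).toLevel (m j * s)) (m := m j) rfl
  let x : DLVert d (fun j => r j ^ s) := ⟨u, by simp [hu, hm]⟩
  have hagree (j : Fin d) : ((expand x).1 j).AgreeBelow (z.1 j) (a j * s) := by
    refine (hexp j ▸ agreeBelow_toLevel _ _).mono (le_min ?_ (Int.ediv_mul_le _ hs.ne'))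
    exact mul_le_mul_of_nonneg_right (ham j) hs.le
  refine ⟨x, ?_⟩
  zify
  calc ((DLGraph d r).dist (expand x) z : ℤ) ≤ (d + 1) * -∑ j, a j * s :=
        dist_le_of_agreeBelow hd hagree
    _ = (d + 1) * ∑ j, ((z.1 j).lvl - a j * s) := by rw [Finset.sum_sub_distrib, z.2, zero_sub]
    _ ≤ (d + 1) * ∑ _j : Fin d, (s : ℤ) := by
      gcongr with j
      have := Int.lt_ediv_add_one_mul_self (z.1 j).lvl hs
      linarith
    _ = (d + 1) * d * s := by simp; ring

end DLVert

theorem exists_quasiIsometry_constants {α β : Type*} (d₁ : α → α → ℕ) (d₂ : β → β → ℕ)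
    (φ : α → β) (a b c : ℕ) (hup : ∀ x y, d₂ (φ x) (φ y) ≤ a * d₁ x y)
    (hdown : ∀ x y, d₁ x y ≤ b * d₂ (φ x) (φ y) + c) (hdense : ∀ z, ∃ x, d₂ (φ x) z ≤ c) :
    ∃ A B : ℝ, 0 < A ∧ 0 ≤ B ∧
      (∀ x y, A⁻¹ * (d₂ (φ x) (φ y) : ℝ) - B ≤ d₁ x y ∧ (d₁ x y : ℝ) ≤ A * d₂ (φ x) (φ y) + B) ∧
      ∀ z, ∃ x, (d₂ (φ x) z : ℝ) ≤ B := by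
  have hA : (0 : ℝ) < a + b + 1 := by positivity
  refine ⟨a + b + 1, c, hA, by positivity, fun x y => ⟨?_, ?_⟩, fun z => ?_⟩
  · have h₁ : (d₂ (φ x) (φ y) : ℝ) ≤ (a + b + 1) * d₁ x y := by
      have := hup x y
      calc (d₂ (φ x) (φ y) : ℝ) ≤ a * d₁ x y := by exact_mod_cast this
        _ ≤ _ := by gcongr; linarith [b.cast_nonneg (α := ℝ)]
    have h₂ := (inv_mul_le_iff₀ hA).mpr h₁
    linarith [c.cast_nonneg (α := ℝ)]
  · have := hdown x y
    calc (d₁ x y : ℝ) ≤ b * d₂ (φ x) (φ y) + c := by exact_mod_cast this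
      _ ≤ _ := by gcongr; linarith [a.cast_nonneg (α := ℝ)]
  · obtain ⟨x, hx⟩ := hdense z
    exact ⟨x, by exact_mod_cast hx⟩

theorem DL_power_quasi_isometric (d : ℕ) (hd : 2 ≤ d) (q : Fin d → ℕ) (hq : ∀ j, 2 ≤ q j)
    (s : ℕ) (hs : 1 ≤ s) :
    ∃ (φ : DLVert d (fun j => q j ^ s) → DLVert d q) (A B : ℝ), 0 < A ∧ 0 ≤ B ∧
      (∀ x y : DLVert d (fun j => q j ^ s),
        A⁻¹ * ((DLGraph d q).dist (φ x) (φ y) : ℝ) - B ≤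
            ((DLGraph d (fun j => q j ^ s)).dist x y : ℝ) ∧
        ((DLGraph d (fun j => q j ^ s)).dist x y : ℝ) ≤
            A * ((DLGraph d q).dist (φ x) (φ y) : ℝ) + B) ∧
      (∀ z : DLVert d q, ∃ x : DLVert d (fun j => q j ^ s),
        ((DLGraph d q).dist (φ x) z : ℝ) ≤ B) := by
  have : NeZero s := ⟨by omega⟩
  have (j : Fin d) : NeZero (q j) := ⟨by have := hq j; omega⟩
  exact ⟨DLVert.expand, exists_quasiIsometry_constants _ _ _ _ _ _ (DLVert.dist_expand_le hd)
    (DLVert.dist_le_dist_expand hd) (DLVert.exists_dist_expand_le hd)⟩
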